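/- arXiv:2402.18232 — 2 statements merged into one kernel-verified Lean document; each statement's English description precedes it below -/
import Mathlib

section
/- Let V₁, V₂, V₃, I₁, I₂, I₃ be complex numbers with I₁ ≠ 0, I₁ + I₂ + I₃ = 0 and I₂ = I₁ e^{(2π/3)i}. Define the reduced current Iᴿ = I₁, the reduced voltage drop Vᴿ = (V₁ − V₃) + (V₂ − V₃) e^{−(2π/3)i}, and the reduced impedance Zᴿ = Vᴿ / Iᴿ. If I = |Iᴿ| denotes the common amplitude of the terminal currents, then the total complex power S = (1/2) ∑_{k=1}^{3} V_k conj(I_k) satisfies S = (1/2) Zᴿ I². -/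
/-!
Kirchhoff's law eliminates `I₃ = -(I₁ + I₂)`, and balance gives `I₂ = I₁ ω` with `ω = e^{2πi/3}`,
so every term of `∑ V_k conj(I_k)` carries the factor `conj I₁`; collecting them leaves
`Vᴿ conj I₁`, because `conj ω = e^{-2πi/3}`. Finally `Zᴿ I² = (Vᴿ / I₁) I₁ conj I₁ = Vᴿ conj I₁`.
-/

open ComplexConjugate

namespace Complex

theorem conj_exp_ofReal_mul_I (θ : ℝ) : conj (exp (θ * I)) = exp (-θ * I) := by
  rw [← exp_conj, map_mul, conj_ofReal, conj_I, mul_neg, neg_mul]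

theorem sum_mul_conj_of_kirchhoff (V₁ V₂ V₃ I₁ ω : ℂ) :
    V₁ * conj I₁ + V₂ * conj (I₁ * ω) + V₃ * conj (-(I₁ + I₁ * ω)) =
      ((V₁ - V₃) + (V₂ - V₃) * conj ω) * conj I₁ := by
  simp only [map_mul, map_neg, map_add]
  ring

theorem div_mul_norm_sq (z w : ℂ) : z / w * (‖w‖ : ℂ) ^ 2 = z * conj w := by
  rw [← mul_conj', mul_comm w, ← mul_assoc, div_mul_eq_mul_div, div_mul_cancel_of_imp]
  rintro rfl
  simp

end Complex

theorem complex_power_reduced_impedance_general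
    (V₁ V₂ V₃ I₁ I₂ I₃ : ℂ)
    (hKCL : I₁ + I₂ + I₃ = 0)
    (hbal : I₂ = I₁ * Complex.exp ((2 * Real.pi / 3) * Complex.I)) :
    let IR : ℂ := I₁
    let VR : ℂ := (V₁ - V₃) + (V₂ - V₃) * Complex.exp (-(2 * Real.pi / 3) * Complex.I)
    let ZR : ℂ := VR / IR
    let I : ℝ := ‖IR‖
    (1/2 : ℂ) * (V₁ * (starRingEnd ℂ) I₁ + V₂ * (starRingEnd ℂ) I₂ + V₃ * (starRingEnd ℂ) I₃)
      = (1/2 : ℂ) * ZR * (I : ℂ) ^ 2 := by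
  intro IR VR ZR I
  have hI₃ : I₃ = -(I₁ + I₂) := by linear_combination hKCL
  have hω : conj (Complex.exp ((2 * Real.pi / 3) * Complex.I)) =
      Complex.exp (-(2 * Real.pi / 3) * Complex.I) := by
    exact_mod_cast Complex.conj_exp_ofReal_mul_I (2 * Real.pi / 3)
  rw [hI₃, hbal, Complex.sum_mul_conj_of_kirchhoff, hω, mul_assoc, Complex.div_mul_norm_sq]

theorem complex_power_reduced_impedance
    (V₁ V₂ V₃ I₁ I₂ I₃ : ℂ)
    (hI₁ : I₁ ≠ 0)
    (hKCL : I₁ + I₂ + I₃ = 0)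
    (hbal : I₂ = I₁ * Complex.exp ((2 * Real.pi / 3) * Complex.I)) :
    let IR : ℂ := I₁
    let VR : ℂ := (V₁ - V₃) + (V₂ - V₃) * Complex.exp (-(2 * Real.pi / 3) * Complex.I)
    let ZR : ℂ := VR / IR
    let I : ℝ := ‖IR‖
    (1/2 : ℂ) * (V₁ * (starRingEnd ℂ) I₁ + V₂ * (starRingEnd ℂ) I₂ + V₃ * (starRingEnd ℂ) I₃)
      = (1/2 : ℂ) * ZR * (I : ℂ) ^ 2 :=
  complex_power_reduced_impedance_general V₁ V₂ V₃ I₁ I₂ I₃ hKCL hbal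
end

section
/- Let V₁, V₂, V₃, I₁, I₂, I₃ be complex numbers with I₁ ≠ 0, I₁ + I₂ + I₃ = 0 and I₂ = I₁ e^{(2π/3)i}. Define Iᴿ = I₁, Vᴿ = (V₁ − V₃) + (V₂ − V₃) e^{−(2π/3)i}, Zᴿ = Vᴿ / Iᴿ, and I = |Iᴿ|. Then the active power absorbed by the network, P = Re((1/2) ∑_{k=1}^{3} V_k conj(I_k)), satisfies P = (1/2) Re(Zᴿ) I². -/
/-! Kirchhoff's law lets one eliminate I₃, so the power only sees the voltages relative to
terminal 3, and balance makes I₂ the rotation of I₁ by e^{2πi/3}; hence 2S = Vᴿ conj(Iᴿ),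
whose real part is Re(Zᴿ) |Iᴿ|². -/

open Complex ComplexConjugate

theorem sum_mul_conj_eq_of_add_add_eq_zero {V₁ V₂ V₃ I₁ I₂ I₃ : ℂ} (a : ℂ)
    (hKCL : I₁ + I₂ + I₃ = 0) (hI₂ : I₂ = I₁ * a) :
    V₁ * conj I₁ + V₂ * conj I₂ + V₃ * conj I₃ = ((V₁ - V₃) + (V₂ - V₃) * conj a) * conj I₁ := by
  rw [eq_neg_of_add_eq_zero_right hKCL, hI₂]
  simp only [map_neg, map_add, map_mul]
  ring

theorem Complex.re_div_mul_sq_norm (z w : ℂ) : (z / w).re * ‖w‖ ^ 2 = (z * conj w).re := by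
  rcases eq_or_ne w 0 with rfl | hw
  · simp
  · rw [Complex.sq_norm, ← re_mul_ofReal, ← mul_conj, ← mul_assoc, div_mul_cancel₀ z hw]

theorem active_power_reduced_impedance_general
    (V₁ V₂ V₃ I₁ I₂ I₃ : ℂ)
    (hKCL : I₁ + I₂ + I₃ = 0)
    (hbal : I₂ = I₁ * Complex.exp ((2 * Real.pi / 3) * Complex.I)) :
    let IR : ℂ := I₁
    let VR : ℂ := (V₁ - V₃) + (V₂ - V₃) * Complex.exp (-(2 * Real.pi / 3) * Complex.I)
    let ZR : ℂ := VR / IR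
    let I : ℝ := ‖IR‖
    ((1/2 : ℂ) * (V₁ * (starRingEnd ℂ) I₁ + V₂ * (starRingEnd ℂ) I₂ + V₃ * (starRingEnd ℂ) I₃)).re
      = (1/2 : ℝ) * ZR.re * I ^ 2 := by
  intro IR VR ZR I
  have hconj : conj (exp (2 * Real.pi / 3 * Complex.I)) = exp (-(2 * Real.pi / 3) * Complex.I) := by
    rw [← exp_conj]
    simp only [map_mul, map_div₀, conj_I, conj_ofReal, map_ofNat]
    ring_nf
  have hZR : ZR.re * I ^ 2 = (VR * conj I₁).re := re_div_mul_sq_norm VR I₁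
  rw [sum_mul_conj_eq_of_add_add_eq_zero _ hKCL hbal, hconj, mul_assoc, hZR,
    one_div, inv_mul_eq_div, div_ofNat_re]
  ring

theorem active_power_reduced_impedance
    (V₁ V₂ V₃ I₁ I₂ I₃ : ℂ)
    (hI₁ : I₁ ≠ 0)
    (hKCL : I₁ + I₂ + I₃ = 0)
    (hbal : I₂ = I₁ * Complex.exp ((2 * Real.pi / 3) * Complex.I)) :
    let IR : ℂ := I₁
    let VR : ℂ := (V₁ - V₃) + (V₂ - V₃) * Complex.exp (-(2 * Real.pi / 3) * Complex.I)
    let ZR : ℂ := VR / IR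
    let I : ℝ := ‖IR‖
    ((1/2 : ℂ) * (V₁ * (starRingEnd ℂ) I₁ + V₂ * (starRingEnd ℂ) I₂ + V₃ * (starRingEnd ℂ) I₃)).re
      = (1/2 : ℝ) * ZR.re * I ^ 2 :=
  active_power_reduced_impedance_general V₁ V₂ V₃ I₁ I₂ I₃ hKCL hbal
end
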